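/- arXiv:2405.03508 — 2 statements merged into one kernel-verified Lean document; each statement's English description precedes it below -/
import Mathlib

section
/- The kernel polynomial K̃(X,Y,t) is irreducible in ℂ[X,Y,t]; consequently it is irreducible as a polynomial in Y with coefficients in ℂ(X,t), as a polynomial in X with coefficients in ℂ(Y,t), and as a polynomial in X and Y with coefficients in ℂ(t). -/
open IntermediateField
open scoped BigOperators Classical

set_option synthInstance.maxHeartbeats 1000000
set_option maxHeartbeats 1600000

noncomputable section

namespace QuadrantWalk

variable {K : Type} [Field K] [Algebra ℂ K]

/-- Evaluation of the step (Laurent) polynomial `S(X,Y) = ∑ w_{i,j} X^i Y^j`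
    at a pair of elements of a field. -/
def stepEval (St : Finset (ℤ × ℤ)) (w : ℤ × ℤ → ℂ) (u v : K) : K :=
  ∑ p ∈ St, algebraMap ℂ K (w p) * u ^ p.1 * v ^ p.2

/-- The step polynomial involves both `X` and `Y`. -/
def NotUnivariate (St : Finset (ℤ × ℤ)) : Prop :=
  (∃ p ∈ St, ∃ q ∈ St, p.1 ≠ q.1) ∧ ∃ p ∈ St, ∃ q ∈ St, p.2 ≠ q.2

/-- The kernel polynomial `K̃(X,Y,t) = X^mx * Y^my * (1 - t·S(X,Y))` as an element of
`ℂ[X,Y,t]`, with variables `0 ↦ X`, `1 ↦ Y`, `2 ↦ t`. -/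
def kernelPoly (St : Finset (ℤ × ℤ)) (w : ℤ × ℤ → ℂ) (mx my : ℕ) :
    MvPolynomial (Fin 3) ℂ :=
  MvPolynomial.X 0 ^ mx * MvPolynomial.X 1 ^ my -
    MvPolynomial.X 2 *
      ∑ p ∈ St, MvPolynomial.C (w p) *
        MvPolynomial.X 0 ^ (p.1 + (mx : ℤ)).toNat *
        MvPolynomial.X 1 ^ (p.2 + (my : ℤ)).toNat

/-- `-mx` (resp. `-my`) is the smallest `X`-exponent (resp. `Y`-exponent) of the model. -/
structure ExponentBounds (St : Finset (ℤ × ℤ)) (mx my : ℕ) : Prop where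
  lowerX : ∀ p ∈ St, -(mx : ℤ) ≤ p.1
  lowerY : ∀ p ∈ St, -(my : ℤ) ≤ p.2
  attainX : ∃ p ∈ St, p.1 = -(mx : ℤ)
  attainY : ∃ p ∈ St, p.2 = -(my : ℤ)

/-- `x`-adjacency : equal first coordinates and equal values of `S`. -/
def XAdj (St : Finset (ℤ × ℤ)) (w : ℤ × ℤ → ℂ) (a b : K × K) : Prop :=
  a.1 = b.1 ∧ stepEval St w a.1 a.2 = stepEval St w b.1 b.2

/-- `y`-adjacency : equal second coordinates and equal values of `S`. -/
def YAdj (St : Finset (ℤ × ℤ)) (w : ℤ × ℤ → ℂ) (a b : K × K) : Prop :=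
  a.2 = b.2 ∧ stepEval St w a.1 a.2 = stepEval St w b.1 b.2

/-- Adjacency. -/
def Adj (St : Finset (ℤ × ℤ)) (w : ℤ × ℤ → ℂ) (a b : K × K) : Prop :=
  XAdj St w a b ∨ YAdj St w a b

/-- The orbit of the walk: the equivalence class of `(x,y)` under the
reflexive-transitive closure of adjacency. -/
def orbit (St : Finset (ℤ × ℤ)) (w : ℤ × ℤ → ℂ) (x y : K) : Set (K × K) :=
  {a | Relation.ReflTransGen (Adj St w) (x, y) a}

/-- `k = ℂ(S(x,y))`. -/
def kF (St : Finset (ℤ × ℤ)) (w : ℤ × ℤ → ℂ) (x y : K) : IntermediateField ℂ K :=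
  adjoin ℂ {stepEval St w x y}

/-- `k(x) = ℂ(x, S(x,y))`. -/
def kxF (St : Finset (ℤ × ℤ)) (w : ℤ × ℤ → ℂ) (x y : K) : IntermediateField ℂ K :=
  adjoin ℂ {x, stepEval St w x y}

/-- `k(y) = ℂ(y, S(x,y))`. -/
def kyF (St : Finset (ℤ × ℤ)) (w : ℤ × ℤ → ℂ) (x y : K) : IntermediateField ℂ K :=
  adjoin ℂ {y, stepEval St w x y}

/-- `k(x,y) = ℂ(x,y)`. -/
def kxyF (x y : K) : IntermediateField ℂ K := adjoin ℂ {x, y}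

/-- `k(𝒪)`: the subfield generated over `k` by all coordinates of the orbit. -/
def orbitF (St : Finset (ℤ × ℤ)) (w : ℤ × ℤ → ℂ) (x y : K) : IntermediateField ℂ K :=
  adjoin ℂ ({stepEval St w x y} ∪ {z | ∃ a ∈ orbit St w x y, z = a.1 ∨ z = a.2})

/-- The standing hypotheses: nonzero weights, a non-univariate step polynomial,
`x, y` algebraically independent over `ℂ`, and `𝕂` an algebraic closure of `ℂ(x,y)`. -/
structure Setting (St : Finset (ℤ × ℤ)) (w : ℤ × ℤ → ℂ) (x y : K) : Prop where
  weight_ne : ∀ p ∈ St, w p ≠ 0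
  notUniv : NotUnivariate St
  indep : AlgebraicIndependent ℂ ![x, y]
  algClosed : IsAlgClosed K
  algebraic : Algebra.IsAlgebraic (kxyF x y) K

lemma self_mem_orbit (St : Finset (ℤ × ℤ)) (w : ℤ × ℤ → ℂ) (x y : K) :
    (x, y) ∈ orbit St w x y := Relation.ReflTransGen.refl

lemma x_mem_orbitF (St : Finset (ℤ × ℤ)) (w : ℤ × ℤ → ℂ) (x y : K) :
    x ∈ orbitF St w x y := by
  apply subset_adjoin
  exact Set.mem_union_right _ ⟨(x, y), self_mem_orbit St w x y, Or.inl rfl⟩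

lemma y_mem_orbitF (St : Finset (ℤ × ℤ)) (w : ℤ × ℤ → ℂ) (x y : K) :
    y ∈ orbitF St w x y := by
  apply subset_adjoin
  exact Set.mem_union_right _ ⟨(x, y), self_mem_orbit St w x y, Or.inr rfl⟩

lemma S_mem_orbitF (St : Finset (ℤ × ℤ)) (w : ℤ × ℤ → ℂ) (x y : K) :
    stepEval St w x y ∈ orbitF St w x y := by
  apply subset_adjoin
  exact Set.mem_union_left _ rfl

lemma x_mem_kxF (St : Finset (ℤ × ℤ)) (w : ℤ × ℤ → ℂ) (x y : K) :
    x ∈ kxF St w x y :=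
  subset_adjoin ℂ _ (Set.mem_insert _ _)

lemma S_mem_kxF (St : Finset (ℤ × ℤ)) (w : ℤ × ℤ → ℂ) (x y : K) :
    stepEval St w x y ∈ kxF St w x y :=
  subset_adjoin ℂ _ (Set.mem_insert_of_mem _ rfl)

lemma y_mem_kyF (St : Finset (ℤ × ℤ)) (w : ℤ × ℤ → ℂ) (x y : K) :
    y ∈ kyF St w x y :=
  subset_adjoin ℂ _ (Set.mem_insert _ _)

lemma S_mem_kyF (St : Finset (ℤ × ℤ)) (w : ℤ × ℤ → ℂ) (x y : K) :
    stepEval St w x y ∈ kyF St w x y :=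
  subset_adjoin ℂ _ (Set.mem_insert_of_mem _ rfl)

/-- The subgroup of `ℂ`-automorphisms of `M` fixing the subfield `E` pointwise. -/
def fixingAuts (E M : IntermediateField ℂ K) : Subgroup (↥M ≃ₐ[ℂ] ↥M) where
  carrier := {σ | ∀ (z : K) (_ : z ∈ E) (hzM : z ∈ M), σ ⟨z, hzM⟩ = ⟨z, hzM⟩}
  one_mem' := fun _ _ _ => rfl
  mul_mem' := by
    intro σ τ hσ hτ z hzE hzM
    show σ (τ ⟨z, hzM⟩) = ⟨z, hzM⟩
    rw [hτ z hzE hzM, hσ z hzE hzM]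
  inv_mem' := by
    intro σ hσ z hzE hzM
    show σ.symm ⟨z, hzM⟩ = ⟨z, hzM⟩
    conv_lhs => rw [← hσ z hzE hzM]
    exact σ.symm_apply_apply _

/-- The Galois group `G_x = Gal(k(𝒪)|k(x))`. -/
def Gx (St : Finset (ℤ × ℤ)) (w : ℤ × ℤ → ℂ) (x y : K) :
    Subgroup (↥(orbitF St w x y) ≃ₐ[ℂ] ↥(orbitF St w x y)) :=
  fixingAuts (kxF St w x y) (orbitF St w x y)

/-- The Galois group `G_y = Gal(k(𝒪)|k(y))`. -/
def Gy (St : Finset (ℤ × ℤ)) (w : ℤ × ℤ → ℂ) (x y : K) :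
    Subgroup (↥(orbitF St w x y) ≃ₐ[ℂ] ↥(orbitF St w x y)) :=
  fixingAuts (kyF St w x y) (orbitF St w x y)

/-- The Galois group `G_{xy} = Gal(k(𝒪)|k(x,y))`. -/
def Gxy (St : Finset (ℤ × ℤ)) (w : ℤ × ℤ → ℂ) (x y : K) :
    Subgroup (↥(orbitF St w x y) ≃ₐ[ℂ] ↥(orbitF St w x y)) :=
  fixingAuts (kxyF x y) (orbitF St w x y)

/-- Extend an automorphism of an intermediate field to a map on all of `K`
(by the identity outside). -/
def extendAut {M : IntermediateField ℂ K} (σ : ↥M ≃ₐ[ℂ] ↥M) (z : K) : K :=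
  if h : z ∈ M then (σ ⟨z, h⟩ : K) else z

/-- The coordinate-wise action of an automorphism on a `0`-chain. -/
def actChain {M : IntermediateField ℂ K} (σ : ↥M ≃ₐ[ℂ] ↥M)
    (γ : (K × K) →₀ ℂ) : (K × K) →₀ ℂ :=
  Finsupp.mapDomain (Prod.map (extendAut σ) (extendAut σ)) γ

/-- Evaluation of a polynomial `P(X,Y,t)` at `(u, v, 1/S(x,y))` for `(u,v) = a`. -/
def evalPt (St : Finset (ℤ × ℤ)) (w : ℤ × ℤ → ℂ) (x y : K)
    (P : MvPolynomial (Fin 3) ℂ) (a : K × K) : K :=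
  MvPolynomial.aeval ![a.1, a.2, (stepEval St w x y)⁻¹] P

/-- Evaluation of a polynomial `P(X,Y,t)` at `(x, y, 1/S(x,y))`. -/
def evalXY (St : Finset (ℤ × ℤ)) (w : ℤ × ℤ → ℂ) (x y : K)
    (P : MvPolynomial (Fin 3) ℂ) : K :=
  evalPt St w x y P (x, y)

/-- Evaluation of the fraction `A/B` at `(a.1, a.2, 1/S(x,y))`. -/
def fracEval (St : Finset (ℤ × ℤ)) (w : ℤ × ℤ → ℂ) (x y : K)
    (A B : MvPolynomial (Fin 3) ℂ) (a : K × K) : K :=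
  evalPt St w x y A a / evalPt St w x y B a

/-- Evaluation (orbit sum) of the fraction `A/B` on a `0`-chain. -/
def chainEval (St : Finset (ℤ × ℤ)) (w : ℤ × ℤ → ℂ) (x y : K)
    (A B : MvPolynomial (Fin 3) ℂ) (γ : (K × K) →₀ ℂ) : K :=
  γ.sum fun a c => algebraMap ℂ K c * fracEval St w x y A B a

/-- A `0`-chain cancels decoupled fractions: the orbit sum of every regular fraction
of the form `F(X,t) + G(Y,t)` on it vanishes. -/
def CancelsDecoupled (St : Finset (ℤ × ℤ)) (w : ℤ × ℤ → ℂ) (mx my : ℕ)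
    (x y : K) (α : (K × K) →₀ ℂ) : Prop :=
  ∀ A₁ B₁ A₂ B₂ : MvPolynomial (Fin 3) ℂ,
    A₁ ∈ MvPolynomial.supported ℂ ({0, 2} : Set (Fin 3)) →
    B₁ ∈ MvPolynomial.supported ℂ ({0, 2} : Set (Fin 3)) →
    A₂ ∈ MvPolynomial.supported ℂ ({1, 2} : Set (Fin 3)) →
    B₂ ∈ MvPolynomial.supported ℂ ({1, 2} : Set (Fin 3)) →
    ¬ kernelPoly St w mx my ∣ B₁ → ¬ kernelPoly St w mx my ∣ B₂ →
    (α.sum fun a c =>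
      algebraMap ℂ K c * (fracEval St w x y A₁ B₁ a + fracEval St w x y A₂ B₂ a)) = 0

/-- The field of fractions `ℂ(X,Y,t)`. -/
abbrev FF : Type := FractionRing (MvPolynomial (Fin 3) ℂ)

/-- The inclusion of `ℂ[X,Y,t]` into `ℂ(X,Y,t)`. -/
def toFF (P : MvPolynomial (Fin 3) ℂ) : FF := algebraMap (MvPolynomial (Fin 3) ℂ) FF P

/-- The regular fraction `A/B` admits a Galois decoupling:
`A/B = F + G + K̃·R` with `F ∈ ℂ(X,t)`, `G ∈ ℂ(Y,t)` and `R` regular. -/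
def AdmitsDecoupling (St : Finset (ℤ × ℤ)) (w : ℤ × ℤ → ℂ) (mx my : ℕ)
    (A B : MvPolynomial (Fin 3) ℂ) : Prop :=
  ∃ F₁ F₂ G₁ G₂ R₁ R₂ : MvPolynomial (Fin 3) ℂ,
    F₁ ∈ MvPolynomial.supported ℂ ({0, 2} : Set (Fin 3)) ∧
    F₂ ∈ MvPolynomial.supported ℂ ({0, 2} : Set (Fin 3)) ∧
    G₁ ∈ MvPolynomial.supported ℂ ({1, 2} : Set (Fin 3)) ∧
    G₂ ∈ MvPolynomial.supported ℂ ({1, 2} : Set (Fin 3)) ∧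
    ¬ kernelPoly St w mx my ∣ F₂ ∧ ¬ kernelPoly St w mx my ∣ G₂ ∧
    ¬ kernelPoly St w mx my ∣ R₂ ∧
    toFF A / toFF B =
      toFF F₁ / toFF F₂ + toFF G₁ / toFF G₂ +
        toFF (kernelPoly St w mx my) * (toFF R₁ / toFF R₂)

/-- `(I, J) = (A/B, Cc/D)` is a pair of Galois invariants: `I - J = K̃·R` with `R` regular. -/
def IsInvariantPair (St : Finset (ℤ × ℤ)) (w : ℤ × ℤ → ℂ) (mx my : ℕ)
    (A B Cc D : MvPolynomial (Fin 3) ℂ) : Prop :=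
  ∃ R₁ R₂ : MvPolynomial (Fin 3) ℂ, ¬ kernelPoly St w mx my ∣ R₂ ∧
    toFF A / toFF B - toFF Cc / toFF D =
      toFF (kernelPoly St w mx my) * (toFF R₁ / toFF R₂)

/-- A constant pair of Galois invariants: both members are equivalent to a
common fraction `c ∈ ℂ(t)` modulo `K̃`. -/
def IsConstantPair (St : Finset (ℤ × ℤ)) (w : ℤ × ℤ → ℂ) (mx my : ℕ)
    (A B Cc D : MvPolynomial (Fin 3) ℂ) : Prop :=
  IsInvariantPair St w mx my A B Cc D ∧
  ∃ c₁ c₂ : MvPolynomial (Fin 3) ℂ,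
    c₁ ∈ MvPolynomial.supported ℂ ({2} : Set (Fin 3)) ∧
    c₂ ∈ MvPolynomial.supported ℂ ({2} : Set (Fin 3)) ∧ c₂ ≠ 0 ∧
    IsInvariantPair St w mx my A B c₁ c₂ ∧ IsInvariantPair St w mx my Cc D c₁ c₂

/-- `(γx, γy)` is a pseudo-decoupling of `(x,y)`. -/
def PseudoDecoupling (St : Finset (ℤ × ℤ)) (w : ℤ × ℤ → ℂ) (mx my : ℕ)
    (x y : K) (γx γy : (K × K) →₀ ℂ) : Prop :=
  ∀ A B : MvPolynomial (Fin 3) ℂ, ¬ kernelPoly St w mx my ∣ B →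
    AdmitsDecoupling St w mx my A B →
      fracEval St w x y A B (x, y) =
          chainEval St w x y A B γx + chainEval St w x y A B γy ∧
        chainEval St w x y A B γx ∈ kxF St w x y ∧
        chainEval St w x y A B γy ∈ kyF St w x y

/-- `(gx, gy, a)` is a decoupling of `(x,y)` in the orbit. -/
def IsDecoupling (St : Finset (ℤ × ℤ)) (w : ℤ × ℤ → ℂ) (mx my : ℕ)
    (x y : K) (gx gy a : (K × K) →₀ ℂ) : Prop :=
  Finsupp.single (x, y) (1 : ℂ) = gx + gy + a ∧
  (∀ σ ∈ Gx St w x y, actChain σ gx = gx) ∧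
  (∀ σ ∈ Gy St w x y, actChain σ gy = gy) ∧
  CancelsDecoupled St w mx my x y a

/-- The `x`-part of the boundary of a `1`-chain. -/
def boundaryX (St : Finset (ℤ × ℤ)) (w : ℤ × ℤ → ℂ)
    (c : ((K × K) × (K × K)) →₀ ℂ) : (K × K) →₀ ℂ :=
  c.sum fun e coeff =>
    if XAdj St w e.1 e.2 then
      coeff • (Finsupp.single e.2 (1 : ℂ) - Finsupp.single e.1 (1 : ℂ)) else 0

/-- The `y`-part of the boundary of a `1`-chain. -/
def boundaryY (St : Finset (ℤ × ℤ)) (w : ℤ × ℤ → ℂ)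
    (c : ((K × K) × (K × K)) →₀ ℂ) : (K × K) →₀ ℂ :=
  c.sum fun e coeff =>
    if YAdj St w e.1 e.2 then
      coeff • (Finsupp.single e.2 (1 : ℂ) - Finsupp.single e.1 (1 : ℂ)) else 0

/-- The `0`-chain induced by a bicolored loop. -/
def IsBicoloredChain (St : Finset (ℤ × ℤ)) (w : ℤ × ℤ → ℂ) (x y : K)
    (α : (K × K) →₀ ℂ) : Prop :=
  ∃ (n : ℕ) (b : ℕ → K × K), 0 < n ∧ b (2 * n) = b 0 ∧
    (∀ j < 2 * n, b j ∈ orbit St w x y) ∧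
    (∀ i < n, XAdj St w (b (2 * i)) (b (2 * i + 1)) ∧
      YAdj St w (b (2 * i + 1)) (b (2 * i + 2))) ∧
    α = ∑ j ∈ Finset.range (2 * n), ((-1 : ℂ) ^ (j + 1)) • Finsupp.single (b j) (1 : ℂ)

/-- The `0`-chain `ω = (1/|𝒪|) ∑_{a ∈ 𝒪} a`. -/
def omegaChain (St : Finset (ℤ × ℤ)) (w : ℤ × ℤ → ℂ) (x y : K)
    (h : (orbit St w x y).Finite) : (K × K) →₀ ℂ :=
  ((h.toFinset.card : ℂ))⁻¹ • ∑ a ∈ h.toFinset, Finsupp.single a (1 : ℂ)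

/-- The average `[G]·γ = (1/|G|) ∑_{σ ∈ G} σ·γ` of a `0`-chain under a group. -/
def groupAverage {M : IntermediateField ℂ K} (G : Subgroup (↥M ≃ₐ[ℂ] ↥M))
    (γ : (K × K) →₀ ℂ) : (K × K) →₀ ℂ :=
  ((Nat.card G : ℂ))⁻¹ • ∑ᶠ σ ∈ (G : Set (↥M ≃ₐ[ℂ] ↥M)), actChain σ γ

/-- `ℂ[X,t]` (two variables: `0` and `1`). -/
abbrev MvP2 : Type := MvPolynomial (Fin 2) ℂ

/-- `ℂ(X,t)`, the fraction field of `ℂ[X,t]`. -/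
abbrev CXt : Type := FractionRing MvP2

/-- Constants `ℂ → ℂ(X,t)`. -/
def cconst : ℂ →+* CXt := (algebraMap MvP2 CXt).comp (MvPolynomial.C)

/-- The first generator of `ℂ(X,t)`. -/
def gen0 : CXt := algebraMap MvP2 CXt (MvPolynomial.X 0)

/-- The second generator of `ℂ(X,t)`. -/
def gen1 : CXt := algebraMap MvP2 CXt (MvPolynomial.X 1)

/-- The kernel polynomial viewed as a polynomial in `Y` over `ℂ(X,t)`. -/
def kernelInY (St : Finset (ℤ × ℤ)) (w : ℤ × ℤ → ℂ) (mx my : ℕ) :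
    Polynomial CXt :=
  MvPolynomial.eval₂ ((Polynomial.C : CXt →+* Polynomial CXt).comp cconst)
    ![Polynomial.C gen0, Polynomial.X, Polynomial.C gen1]
    (kernelPoly St w mx my)

/-- The kernel polynomial viewed as a polynomial in `X` over `ℂ(Y,t)`. -/
def kernelInX (St : Finset (ℤ × ℤ)) (w : ℤ × ℤ → ℂ) (mx my : ℕ) :
    Polynomial CXt :=
  MvPolynomial.eval₂ ((Polynomial.C : CXt →+* Polynomial CXt).comp cconst)
    ![Polynomial.X, Polynomial.C gen0, Polynomial.C gen1]
    (kernelPoly St w mx my)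

/-- The kernel polynomial viewed as a polynomial in `X, Y` over `ℂ(t)`. -/
def kernelInXY (St : Finset (ℤ × ℤ)) (w : ℤ × ℤ → ℂ) (mx my : ℕ) :
    MvPolynomial (Fin 2) (RatFunc ℂ) :=
  MvPolynomial.eval₂
    ((MvPolynomial.C : RatFunc ℂ →+* MvPolynomial (Fin 2) (RatFunc ℂ)).comp
      (RatFunc.C : ℂ →+* RatFunc ℂ))
    ![MvPolynomial.X 0, MvPolynomial.X 1, MvPolynomial.C RatFunc.X]
    (kernelPoly St w mx my)

/-- The specialization `K̃(x, Y, 1/S(x,y))` as a polynomial in `Y` over `k(x)`. -/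
def kernelAtX (St : Finset (ℤ × ℤ)) (w : ℤ × ℤ → ℂ) (mx my : ℕ) (x y : K) :
    Polynomial ↥(kxF St w x y) :=
  MvPolynomial.aeval
    ![Polynomial.C (⟨x, x_mem_kxF St w x y⟩ : kxF St w x y), Polynomial.X,
      Polynomial.C (⟨(stepEval St w x y)⁻¹, inv_mem (S_mem_kxF St w x y)⟩ : kxF St w x y)]
    (kernelPoly St w mx my)

/-- The specialization `K̃(X, y, 1/S(x,y))` as a polynomial in `X` over `k(y)`. -/
def kernelAtY (St : Finset (ℤ × ℤ)) (w : ℤ × ℤ → ℂ) (mx my : ℕ) (x y : K) :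
    Polynomial ↥(kyF St w x y) :=
  MvPolynomial.aeval
    ![Polynomial.X, Polynomial.C (⟨y, y_mem_kyF St w x y⟩ : kyF St w x y),
      Polynomial.C (⟨(stepEval St w x y)⁻¹, inv_mem (S_mem_kyF St w x y)⟩ : kyF St w x y)]
    (kernelPoly St w mx my)

/-- Values of regular fractions with numerator and denominator supported on a set
of variables. -/
def regRange (St : Finset (ℤ × ℤ)) (w : ℤ × ℤ → ℂ) (x y : K) (mx my : ℕ)
    (s : Set (Fin 3)) : Set K :=
  {z | ∃ A B : MvPolynomial (Fin 3) ℂ,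
    A ∈ MvPolynomial.supported ℂ s ∧ B ∈ MvPolynomial.supported ℂ s ∧
    ¬ kernelPoly St w mx my ∣ B ∧ z = evalXY St w x y A / evalXY St w x y B}

end QuadrantWalk

/-! Viewed as a polynomial in `t` over `ℂ[X,Y]`, `K̃ = X^mx Y^my - t · X^mx Y^my S(X,Y)` has
degree one, and its two coefficients are coprime: the first is a monomial, while neither `X` nor
`Y` divides the second, because the minimal exponents `-mx` and `-my` are attained by steps with
nonzero weights. A degree-one polynomial with coprime coefficients over a domain is irreducible.

Localizing the coefficient ring preserves primality of an element that divides none of its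
nonzero elements, which is the case as soon as `K̃` involves one of the variables kept
polynomial; since `S` is not univariate, `K̃` involves both `X` and `Y`. For the one-variable
extensions this is Gauss's lemma. -/

open MvPolynomial

theorem IsLocalization.prime_algebraMap_of_forall_not_dvd {R S : Type*} [CommRing R]
    [CommRing S] [Algebra R S] {M : Submonoid R} [IsLocalization M S]
    (hM : M ≤ nonZeroDivisors R) {p : R} (hp : Prime p) (hd : ∀ m ∈ M, ¬ p ∣ m) :
    Prime (algebraMap R S p) := by
  have hp0 : algebraMap R S p ≠ 0 :=
    (IsLocalization.injective S hM).ne_iff' (map_zero _) |>.mpr hp.ne_zero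
  rw [← Ideal.span_singleton_prime hp0, ← Set.image_singleton, ← Ideal.map_span]
  refine IsLocalization.isPrime_of_isPrime_disjoint M S _
    ((Ideal.span_singleton_prime hp.ne_zero).mpr hp) ?_
  exact Set.disjoint_left.mpr fun m hm hpm => hd m hm (Ideal.mem_span_singleton.mp hpm)

namespace MvPolynomial

theorem not_X_dvd_of_coeff_ne_zero {σ R : Type*} [CommSemiring R] {p : MvPolynomial σ R}
    {d : σ →₀ ℕ} {i : σ} (hd : coeff d p ≠ 0) (hi : d i = 0) : ¬ X i ∣ p := by
  rintro ⟨q, rfl⟩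
  rw [coeff_X_mul', if_neg (by simpa using hi)] at hd
  exact hd rfl

theorem irreducible_map_optionEquivLeft_rename {k σ τ : Type*} [Field k] [Finite τ]
    (e : σ ≃ Option τ) {i : σ} (hi : e i = none) {p : MvPolynomial σ k}
    (hp : Irreducible p) (hdeg : p.degreeOf i ≠ 0) :
    Irreducible ((optionEquivLeft k τ (rename e p)).map
      (algebraMap (MvPolynomial τ k) (FractionRing (MvPolynomial τ k)))) := by
  have hq : Irreducible (optionEquivLeft k τ (rename e p)) :=
    (MulEquiv.irreducible_iff ((renameEquiv k e).trans (optionEquivLeft k τ))).mpr hp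
  have hq_deg : (optionEquivLeft k τ (rename e p)).natDegree ≠ 0 := by
    rwa [natDegree_optionEquivLeft, ← hi, degreeOf_rename_of_injective e.injective]
  exact (hq.isPrimitive hq_deg).irreducible_iff_irreducible_map_fraction_map.mp hq

attribute [local instance] algebraMvPolynomial in
theorem prime_map_of_totalDegree_ne_zero {R K σ : Type*} [CommRing R] [IsDomain R]
    [CommRing K] [Algebra R K] [IsFractionRing R K] {p : MvPolynomial σ R} (hp : Prime p)
    (hdeg : p.totalDegree ≠ 0) : Prime (map (algebraMap R K) p) := by
  refine IsLocalization.prime_algebraMap_of_forall_not_dvd (M := (nonZeroDivisors R).map C)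
    (S := MvPolynomial σ K) ?_ hp ?_
  · rintro _ ⟨r, hr, rfl⟩
    exact mem_nonZeroDivisors_of_ne_zero (C_ne_zero.mpr (nonZeroDivisors.ne_zero hr))
  · rintro _ ⟨r, hr, rfl⟩ hpr
    obtain ⟨b, -, rfl⟩ := (dvd_C_iff_exists (nonZeroDivisors.ne_zero hr)).mp hpr
    exact hdeg (totalDegree_C b)

theorem totalDegree_optionEquivRight_rename_ne_zero {R σ τ : Type*} [CommRing R]
    (e : σ ≃ Option τ) {p : MvPolynomial σ R} {i : σ} (hi : i ∈ p.vars) (hei : e i ≠ none) :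
    (optionEquivRight R τ (rename e p)).totalDegree ≠ 0 := by
  set b := coeff 0 (optionEquivRight R τ (rename e p))
  intro h
  rw [totalDegree_eq_zero_iff_eq_C, ← AlgEquiv.eq_symm_apply, optionEquivRight_symm_apply,
    aevalTower_C] at h
  have hp : p = Polynomial.aeval (X (e.symm none)) b := calc
    p = rename e.symm (rename e p) := by simp [rename_rename]
    _ = Polynomial.aeval (X (e.symm none)) b := by
      rw [h, ← Polynomial.aeval_algHom_apply, rename_X]
  have hmem : p ∈ supported R {e.symm none} := by
    rw [hp, supported_eq_adjoin_X, Set.image_singleton]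
    exact Polynomial.aeval_mem_adjoin_singleton _ _
  have hi' : i = e.symm none := mem_supported.mp hmem hi
  exact hei (by rw [hi', Equiv.apply_symm_apply])

end MvPolynomial

namespace QuadrantWalk

section StepPolynomial

variable {σ : Type*} (St : Finset (ℤ × ℤ)) (w : ℤ × ℤ → ℂ) (mx my : ℕ) (i j : σ)

/-- `X^mx Y^my S(X,Y)`, written in the variables `X i` and `X j`. -/
def shiftedStepPoly : MvPolynomial σ ℂ :=
  ∑ p ∈ St, C (w p) * X i ^ (p.1 + (mx : ℤ)).toNat * X j ^ (p.2 + (my : ℤ)).toNat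

def stepExponent (p : ℤ × ℤ) : σ →₀ ℕ :=
  Finsupp.single i (p.1 + (mx : ℤ)).toNat + Finsupp.single j (p.2 + (my : ℤ)).toNat

variable {St w mx my i j}

theorem stepExponent_injOn (hij : i ≠ j) (hb : ExponentBounds St mx my) :
    Set.InjOn (stepExponent mx my i j) St := by
  intro p hp q hq hpq
  have h₁ := DFunLike.congr_fun hpq i
  have h₂ := DFunLike.congr_fun hpq j
  simp only [stepExponent, Finsupp.add_apply, Finsupp.single_eq_same,
    Finsupp.single_eq_of_ne hij, Finsupp.single_eq_of_ne hij.symm, add_zero, zero_add] at h₁ h₂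
  have := hb.lowerX p hp; have := hb.lowerX q hq
  have := hb.lowerY p hp; have := hb.lowerY q hq
  exact Prod.ext (by omega) (by omega)

theorem coeff_stepExponent_shiftedStepPoly (hij : i ≠ j) (hb : ExponentBounds St mx my)
    {q : ℤ × ℤ} (hq : q ∈ St) :
    coeff (stepExponent mx my i j q) (shiftedStepPoly St w mx my i j) = w q := by
  have hmono : shiftedStepPoly St w mx my i j =
      ∑ p ∈ St, monomial (stepExponent mx my i j p) (w p) :=
    Finset.sum_congr rfl fun p _ => by
      rw [C_mul_X_pow_eq_monomial, X_pow_eq_monomial, monomial_mul, mul_one, stepExponent]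
  rw [hmono, coeff_sum, Finset.sum_eq_single_of_mem q hq fun p hp hpq => ?_, coeff_monomial,
    if_pos rfl]
  exact (coeff_monomial _ _ _).trans (if_neg fun h => hpq (stepExponent_injOn hij hb hp hq h))

theorem not_X_left_dvd_shiftedStepPoly (hij : i ≠ j) (hw : ∀ p ∈ St, w p ≠ 0)
    (hb : ExponentBounds St mx my) : ¬ X i ∣ shiftedStepPoly St w mx my i j := by
  obtain ⟨q, hq, hq₁⟩ := hb.attainX
  refine not_X_dvd_of_coeff_ne_zero
    (by rw [coeff_stepExponent_shiftedStepPoly hij hb hq]; exact hw q hq) ?_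
  simp [stepExponent, hq₁, Finsupp.single_eq_of_ne hij]

theorem not_X_right_dvd_shiftedStepPoly (hij : i ≠ j) (hw : ∀ p ∈ St, w p ≠ 0)
    (hb : ExponentBounds St mx my) : ¬ X j ∣ shiftedStepPoly St w mx my i j := by
  obtain ⟨q, hq, hq₂⟩ := hb.attainY
  refine not_X_dvd_of_coeff_ne_zero
    (by rw [coeff_stepExponent_shiftedStepPoly hij hb hq]; exact hw q hq) ?_
  simp [stepExponent, hq₂, Finsupp.single_eq_of_ne hij.symm]

end StepPolynomial

section KernelPolynomial

variable {St : Finset (ℤ × ℤ)} {w : ℤ × ℤ → ℂ} {mx my : ℕ}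

variable (St w mx my) in
theorem kernelPoly_eq :
    kernelPoly St w mx my = X 0 ^ mx * X 1 ^ my - X 2 * shiftedStepPoly St w mx my 0 1 :=
  rfl

variable (St w mx my) in
theorem optionEquivLeft_rename_kernelPoly :
    optionEquivLeft ℂ (Fin 2) (rename (finSuccEquiv' 2) (kernelPoly St w mx my)) =
      Polynomial.C (-shiftedStepPoly St w mx my 0 1) * Polynomial.X +
        Polynomial.C (X 0 ^ mx * X 1 ^ my) := by
  have h₀ : finSuccEquiv' (2 : Fin 3) 0 = some 0 := rfl
  have h₁ : finSuccEquiv' (2 : Fin 3) 1 = some 1 := rfl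
  simp only [kernelPoly_eq, shiftedStepPoly, map_sub, map_mul, map_pow, map_sum, map_neg,
    rename_X, rename_C, h₀, h₁, finSuccEquiv'_at, optionEquivLeft_X_some, optionEquivLeft_X_none,
    optionEquivLeft_C]
  ring

theorem irreducible_kernelPoly (hw : ∀ p ∈ St, w p ≠ 0) (hb : ExponentBounds St mx my) :
    Irreducible (kernelPoly St w mx my) := by
  have hX₀ := not_X_left_dvd_shiftedStepPoly (σ := Fin 2) (j := 1) zero_ne_one hw hb
  have hX₁ := not_X_right_dvd_shiftedStepPoly (σ := Fin 2) (i := 0) zero_ne_one hw hb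
  have hcoprime : IsRelPrime (-shiftedStepPoly St w mx my (0 : Fin 2) 1) (X 0 ^ mx * X 1 ^ my) :=
    .neg_left <| .symm <| .mul_left
      ((X_prime.irreducible.isRelPrime_iff_not_dvd.mpr hX₀).pow_left)
      ((X_prime.irreducible.isRelPrime_iff_not_dvd.mpr hX₁).pow_left)
  rw [← MulEquiv.irreducible_iff ((renameEquiv ℂ (finSuccEquiv' 2)).trans
    (optionEquivLeft ℂ (Fin 2)))]
  exact (optionEquivLeft_rename_kernelPoly St w mx my).symm ▸
    Polynomial.irreducible_C_mul_X_add_C (neg_ne_zero.mpr fun h => hX₀ (h ▸ dvd_zero _)) hcoprime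

theorem coeff_kernelPoly (hb : ExponentBounds St mx my) {q : ℤ × ℤ} (hq : q ∈ St) :
    coeff (Finsupp.single 2 1 + stepExponent mx my 0 1 q) (kernelPoly St w mx my) = -w q := by
  have hA : coeff (Finsupp.single 2 1 + stepExponent mx my 0 1 q)
      (X 0 ^ mx * X 1 ^ my : MvPolynomial (Fin 3) ℂ) = 0 := by
    rw [X_pow_eq_monomial, X_pow_eq_monomial, monomial_mul, coeff_monomial, if_neg]
    intro h
    simpa [stepExponent] using DFunLike.congr_fun h 2
  rw [kernelPoly_eq, coeff_sub, hA, coeff_X_mul,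
    coeff_stepExponent_shiftedStepPoly (by decide) hb hq, zero_sub]

theorem mem_vars_kernelPoly (hw : ∀ p ∈ St, w p ≠ 0) (hb : ExponentBounds St mx my)
    {q : ℤ × ℤ} (hq : q ∈ St) {k : Fin 3} (hk : stepExponent mx my 0 1 q k ≠ 0) :
    k ∈ (kernelPoly St w mx my).vars := by
  refine (mem_vars_iff_mem_support k).mpr
    ⟨Finsupp.single 2 1 + stepExponent mx my 0 1 q, mem_support_iff.mpr ?_, ?_⟩
  · rw [coeff_kernelPoly hb hq]
    exact neg_ne_zero.mpr (hw q hq)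
  · rw [Finsupp.mem_support_iff, Finsupp.add_apply]
    omega

theorem zero_mem_vars_kernelPoly (hw : ∀ p ∈ St, w p ≠ 0) (hU : NotUnivariate St)
    (hb : ExponentBounds St mx my) : 0 ∈ (kernelPoly St w mx my).vars := by
  obtain ⟨p, hp, q, hq, hpq⟩ := hU.1
  have := hb.lowerX p hp
  have := hb.lowerX q hq
  rcases hpq.lt_or_gt with h | h
  · exact mem_vars_kernelPoly hw hb hq (by simp [stepExponent]; omega)
  · exact mem_vars_kernelPoly hw hb hp (by simp [stepExponent]; omega)

theorem one_mem_vars_kernelPoly (hw : ∀ p ∈ St, w p ≠ 0) (hU : NotUnivariate St)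
    (hb : ExponentBounds St mx my) : 1 ∈ (kernelPoly St w mx my).vars := by
  obtain ⟨p, hp, q, hq, hpq⟩ := hU.2
  have := hb.lowerY p hp
  have := hb.lowerY q hq
  rcases hpq.lt_or_gt with h | h
  · exact mem_vars_kernelPoly hw hb hq (by simp [stepExponent]; omega)
  · exact mem_vars_kernelPoly hw hb hp (by simp [stepExponent]; omega)

end KernelPolynomial

section Specializations

variable (St : Finset (ℤ × ℤ)) (w : ℤ × ℤ → ℂ) (mx my : ℕ)

theorem kernelInY_eq :
    kernelInY St w mx my = (optionEquivLeft ℂ (Fin 2)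
      (rename (finSuccEquiv' 1) (kernelPoly St w mx my))).map (algebraMap MvP2 CXt) := by
  have h : eval₂Hom ((Polynomial.C : CXt →+* _).comp cconst)
      ![Polynomial.C gen0, Polynomial.X, Polynomial.C gen1] =
      (Polynomial.mapRingHom (algebraMap MvP2 CXt)).comp
        ((optionEquivLeft ℂ (Fin 2)).toAlgHom.comp (rename (finSuccEquiv' 1))).toRingHom := by
    have h₀ : finSuccEquiv' (1 : Fin 3) 0 = some 0 := rfl
    have h₂ : finSuccEquiv' (1 : Fin 3) 2 = some 1 := rfl
    refine MvPolynomial.ringHom_ext (fun c => ?_) fun k => ?_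
    · simp [cconst]
    · fin_cases k <;> simp [gen0, gen1, h₀, h₂]
  exact RingHom.congr_fun h _

theorem kernelInX_eq :
    kernelInX St w mx my = (optionEquivLeft ℂ (Fin 2)
      (rename (finSuccEquiv' 0) (kernelPoly St w mx my))).map (algebraMap MvP2 CXt) := by
  have h : eval₂Hom ((Polynomial.C : CXt →+* _).comp cconst)
      ![Polynomial.X, Polynomial.C gen0, Polynomial.C gen1] =
      (Polynomial.mapRingHom (algebraMap MvP2 CXt)).comp
        ((optionEquivLeft ℂ (Fin 2)).toAlgHom.comp (rename (finSuccEquiv' 0))).toRingHom := by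
    have h₁ : finSuccEquiv' (0 : Fin 3) 1 = some 0 := rfl
    have h₂ : finSuccEquiv' (0 : Fin 3) 2 = some 1 := rfl
    refine MvPolynomial.ringHom_ext (fun c => ?_) fun k => ?_
    · simp [cconst]
    · fin_cases k <;> simp [gen0, gen1, h₁, h₂]
  exact RingHom.congr_fun h _

theorem kernelInXY_eq :
    kernelInXY St w mx my = map (algebraMap (Polynomial ℂ) (RatFunc ℂ))
      (optionEquivRight ℂ (Fin 2) (rename (finSuccEquiv' 2) (kernelPoly St w mx my))) := by
  have h : eval₂Hom ((C : RatFunc ℂ →+* MvPolynomial (Fin 2) (RatFunc ℂ)).comp RatFunc.C)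
      ![X 0, X 1, C RatFunc.X] =
      (map (algebraMap (Polynomial ℂ) (RatFunc ℂ))).comp
        ((optionEquivRight ℂ (Fin 2)).toAlgHom.comp (rename (finSuccEquiv' 2))).toRingHom := by
    have h₀ : finSuccEquiv' (2 : Fin 3) 0 = some 0 := rfl
    have h₁ : finSuccEquiv' (2 : Fin 3) 1 = some 1 := rfl
    refine MvPolynomial.ringHom_ext (fun c => ?_) fun k => ?_
    · simp [RatFunc.algebraMap_C]
    · fin_cases k <;> simp [h₀, h₁, RatFunc.algebraMap_X]
  exact RingHom.congr_fun h _

variable {St w mx my}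

theorem irreducible_kernelInY (hw : ∀ p ∈ St, w p ≠ 0) (hU : NotUnivariate St)
    (hb : ExponentBounds St mx my) : Irreducible (kernelInY St w mx my) := by
  rw [kernelInY_eq]
  exact irreducible_map_optionEquivLeft_rename _ (finSuccEquiv'_at 1)
    (irreducible_kernelPoly hw hb)
    (mem_vars_iff_degreeOf_ne_zero.mp (one_mem_vars_kernelPoly hw hU hb))

theorem irreducible_kernelInX (hw : ∀ p ∈ St, w p ≠ 0) (hU : NotUnivariate St)
    (hb : ExponentBounds St mx my) : Irreducible (kernelInX St w mx my) := by
  rw [kernelInX_eq]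
  exact irreducible_map_optionEquivLeft_rename _ (finSuccEquiv'_at 0)
    (irreducible_kernelPoly hw hb)
    (mem_vars_iff_degreeOf_ne_zero.mp (zero_mem_vars_kernelPoly hw hU hb))

theorem irreducible_kernelInXY (hw : ∀ p ∈ St, w p ≠ 0) (hU : NotUnivariate St)
    (hb : ExponentBounds St mx my) : Irreducible (kernelInXY St w mx my) := by
  rw [kernelInXY_eq]
  refine (prime_map_of_totalDegree_ne_zero (K := RatFunc ℂ) ?_ ?_).irreducible
  · exact UniqueFactorizationMonoid.irreducible_iff_prime.mp <|
      (MulEquiv.irreducible_iff ((renameEquiv ℂ (finSuccEquiv' 2)).trans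
        (optionEquivRight ℂ (Fin 2)))).mpr (irreducible_kernelPoly hw hb)
  · exact totalDegree_optionEquivRight_rename_ne_zero _ (one_mem_vars_kernelPoly hw hU hb)
      (by decide)

end Specializations

/-- The kernel polynomial `K̃(X,Y,t)` is irreducible in `ℂ[X,Y,t]`;
consequently it is irreducible in `ℂ(X,t)[Y]`, in `ℂ(Y,t)[X]` and in `ℂ(t)[X,Y]`. -/
theorem stmt1 (St : Finset (ℤ × ℤ)) (w : ℤ × ℤ → ℂ) (mx my : ℕ)
    (hw : ∀ p ∈ St, w p ≠ 0) (hU : NotUnivariate St)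
    (hb : ExponentBounds St mx my) :
    Irreducible (kernelPoly St w mx my) ∧
    Irreducible (kernelInY St w mx my) ∧
    Irreducible (kernelInX St w mx my) ∧
    Irreducible (kernelInXY St w mx my) :=
  ⟨irreducible_kernelPoly hw hb, irreducible_kernelInY hw hU hb, irreducible_kernelInX hw hU hb,
    irreducible_kernelInXY hw hU hb⟩

end QuadrantWalk
end
end

section
/- If σ : 𝕂 → 𝕂 is a k(x)-algebra endomorphism, then for every (u,v) in the orbit 𝒪, the pair σ·(u,v) = (σ(u), σ(v)) is again in 𝒪. Similarly, the orbit is stable under every k(y)-algebra endomorphism of 𝕂. -/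
open IntermediateField
open scoped BigOperators Classical

set_option synthInstance.maxHeartbeats 1000000
set_option maxHeartbeats 1600000

noncomputable section

namespace QuadrantWalk

section Map

variable {K L : Type} [Field K] [Algebra ℂ K] [Field L] [Algebra ℂ L]
  (St : Finset (ℤ × ℤ)) (w : ℤ × ℤ → ℂ) (φ : K →ₐ[ℂ] L)

lemma stepEval_map (u v : K) : stepEval St w (φ u) (φ v) = φ (stepEval St w u v) := by
  simp [stepEval, map_sum, map_zpow₀]

lemma XAdj.map {a b : K × K} (h : XAdj St w a b) :
    XAdj St w (φ a.1, φ a.2) (φ b.1, φ b.2) :=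
  ⟨congrArg φ h.1, by simp only [stepEval_map, h.2]⟩

lemma YAdj.map {a b : K × K} (h : YAdj St w a b) :
    YAdj St w (φ a.1, φ a.2) (φ b.1, φ b.2) :=
  ⟨congrArg φ h.1, by simp only [stepEval_map, h.2]⟩

lemma Adj.map {a b : K × K} (h : Adj St w a b) :
    Adj St w (φ a.1, φ a.2) (φ b.1, φ b.2) :=
  h.imp (XAdj.map St w φ) (YAdj.map St w φ)

lemma map_mem_orbit {x y : K} {a : K × K} (ha : a ∈ orbit St w x y) :
    (φ a.1, φ a.2) ∈ orbit St w (φ x) (φ y) :=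
  Relation.ReflTransGen.lift (fun p : K × K => (φ p.1, φ p.2))
    (fun _ _ => Adj.map St w φ) _ _ ha

end Map

section Endomorphism

variable {K : Type} [Field K] [Algebra ℂ K]
  (St : Finset (ℤ × ℤ)) (w : ℤ × ℤ → ℂ) (x y : K) (σ : K →ₐ[ℂ] K)

lemma map_mem_orbit_of_adj (hσ : Adj St w (x, y) (σ x, σ y)) {a : K × K}
    (ha : a ∈ orbit St w x y) : (σ a.1, σ a.2) ∈ orbit St w x y :=
  (Relation.ReflTransGen.single hσ).trans (map_mem_orbit St w σ ha)

lemma xAdj_map_of_fixes_kxF (hσ : ∀ z ∈ kxF St w x y, σ z = z) :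
    XAdj St w (x, y) (σ x, σ y) :=
  ⟨(hσ x (x_mem_kxF St w x y)).symm, by
    rw [stepEval_map, hσ _ (S_mem_kxF St w x y)]⟩

lemma yAdj_map_of_fixes_kyF (hσ : ∀ z ∈ kyF St w x y, σ z = z) :
    YAdj St w (x, y) (σ x, σ y) :=
  ⟨(hσ y (y_mem_kyF St w x y)).symm, by
    rw [stepEval_map, hσ _ (S_mem_kyF St w x y)]⟩

end Endomorphism

theorem stmt4_general {K : Type} [Field K] [Algebra ℂ K]
    (St : Finset (ℤ × ℤ)) (w : ℤ × ℤ → ℂ) (x y : K) :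
    (∀ σ : K →ₐ[ℂ] K, (∀ z ∈ kxF St w x y, σ z = z) →
      ∀ a ∈ orbit St w x y, (σ a.1, σ a.2) ∈ orbit St w x y) ∧
    (∀ σ : K →ₐ[ℂ] K, (∀ z ∈ kyF St w x y, σ z = z) →
      ∀ a ∈ orbit St w x y, (σ a.1, σ a.2) ∈ orbit St w x y) :=
  ⟨fun σ hσ _ =>
      map_mem_orbit_of_adj St w x y σ (Or.inl (xAdj_map_of_fixes_kxF St w x y σ hσ)),
    fun σ hσ _ =>
      map_mem_orbit_of_adj St w x y σ (Or.inr (yAdj_map_of_fixes_kyF St w x y σ hσ))⟩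

/-- the orbit is setwise stable under every `k(x)`-algebra endomorphism
of `𝕂`, and likewise under every `k(y)`-algebra endomorphism of `𝕂`. -/
theorem stmt4 {K : Type} [Field K] [Algebra ℂ K]
    (St : Finset (ℤ × ℤ)) (w : ℤ × ℤ → ℂ) (x y : K)
    (hset : Setting St w x y) :
    (∀ σ : K →ₐ[ℂ] K, (∀ z ∈ kxF St w x y, σ z = z) →
      ∀ a ∈ orbit St w x y, (σ a.1, σ a.2) ∈ orbit St w x y) ∧
    (∀ σ : K →ₐ[ℂ] K, (∀ z ∈ kyF St w x y, σ z = z) →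
      ∀ a ∈ orbit St w x y, (σ a.1, σ a.2) ∈ orbit St w x y) :=
  stmt4_general St w x y

end QuadrantWalk
end
end
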